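/- Consider two spacecraft with symmetric positive-definite inertia matrices J₁, J₂, whose attitudes and angular velocities satisfy Ṙᵢ = Rᵢ Ω̂ᵢ and Jᵢ Ω̇ᵢ + Ωᵢ × (JᵢΩᵢ) = uᵢ with the feedback controls u₁ = −e₁₂ − k_{Ω₁} e_{Ω₁} + Ω̂^d₁ J₁(e_{Ω₁} + Ω^d₁) + J₁ Ω̇^d₁ and u₂ = −e₂₁ − k_{Ω₂} e_{Ω₂} + Ω̂^d₂ J₂(e_{Ω₂} + Ω^d₂) + J₂ Ω̇^d₂, where k_{Ω₁}, k_{Ω₂} > 0 and e_{Ωᵢ} = Ωᵢ − Ω^dᵢ. Then the function 𝒰 = (1/2) e_{Ω₁}·J₁e_{Ω₁} + (1/2) e_{Ω₂}·J₂e_{Ω₂} + Ψ₁₂ satisfies d𝒰/dt = −k_{Ω₁}‖e_{Ω₁}‖² − k_{Ω₂}‖e_{Ω₂}‖² ≤ 0 along trajectories; in particular 𝒰 is non-increasing. -/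

import Mathlib

noncomputable section
open Matrix

/-- Vectors in ℝ³ with the Euclidean norm. -/
abbrev V3 : Type := EuclideanSpace ℝ (Fin 3)

/-- Real 3×3 matrices. -/
abbrev M3 : Type := Matrix (Fin 3) (Fin 3) ℝ

/-- The special orthogonal group SO(3): RᵀR = I and det R = 1. -/
def SO3 (R : M3) : Prop := Rᵀ * R = 1 ∧ R.det = 1

/-- Action of a matrix on a vector. -/
def matVec (A : M3) (v : V3) : V3 := WithLp.toLp 2 (A.mulVec v)

/-- Cross product on ℝ³. -/
def cross3 (u v : V3) : V3 :=
  WithLp.toLp 2 ![u 1 * v 2 - u 2 * v 1, u 2 * v 0 - u 0 * v 2, u 0 * v 1 - u 1 * v 0]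

/-- The hat map: x̂ y = x × y. -/
def hat (x : V3) : M3 :=
  !![0, -x 2, x 1; x 2, 0, -x 0; -x 1, x 0, 0]

/-- The vee map, inverse of the hat map on skew-symmetric matrices. -/
def vee (A : M3) : V3 := WithLp.toLp 2 ![A 2 1, A 0 2, A 1 0]

/-- Dot product on ℝ³. -/
def dot3 (u v : V3) : ℝ := u 0 * v 0 + u 1 * v 1 + u 2 * v 2

attribute [local instance] Matrix.normedAddCommGroup Matrix.normedSpace

/-! The measured directions are body-frame images of fixed inertial directions, so each `b_ij`
rotates rigidly with spacecraft `i`: `ḃ_ij = b_ij × Ωᵢ`. Rotations preserve norms and cross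
products, hence `a₁₂` is constant, and differentiating `Ψ₁₂` (the `Ω^d` terms come from
`Q̇^d₁₂`) gives exactly `e_{Ω₁}·e₁₂ + e_{Ω₂}·e₂₁`. The closed-loop dynamics give
`d/dt (½ e_Ω·J e_Ω) = −e_Ω·e − k_Ω‖e_Ω‖²` for each spacecraft (the feedforward `Ω̂^d J Ω` turns the
gyroscopic term into `−e_Ω × JΩ`, which is orthogonal to `e_Ω`), so the coupling terms cancel in
the sum. -/

theorem dot3_eq_inner (u v : V3) : dot3 u v = inner ℝ u v := by
  simp only [dot3, PiLp.inner_apply, RCLike.inner_apply, Real.ringHom_apply, Fin.sum_univ_three]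
  ring

theorem dot3_comm (u v : V3) : dot3 u v = dot3 v u := by
  simp only [dot3]; ring

theorem dot3_self (x : V3) : dot3 x x = ‖x‖ ^ 2 := by
  rw [dot3_eq_inner, real_inner_self_eq_norm_sq]

theorem dot3_matVec (A : M3) (u v : V3) : dot3 u (matVec A v) = dot3 (matVec Aᵀ u) v := by
  simp only [dot3, matVec, mulVec, dotProduct, Fin.sum_univ_three, transpose_apply]
  ring

theorem matVec_one (v : V3) : matVec 1 v = v := by
  simp [matVec]

theorem matVec_sub (A : M3) (u v : V3) : matVec A (u - v) = matVec A u - matVec A v := by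
  simp [matVec, Matrix.mulVec_sub]

theorem matVec_matVec (A B : M3) (v : V3) : matVec A (matVec B v) = matVec (A * B) v := by
  simp [matVec, Matrix.mulVec_mulVec]

theorem matVec_hat (x v : V3) : matVec (hat x) v = cross3 x v := by
  ext i; fin_cases i <;> simp [matVec, hat, cross3, dotProduct, Fin.sum_univ_three] <;> ring

theorem matVec_transpose_mul_hat (R : M3) (x v : V3) :
    matVec (R * hat x)ᵀ v = cross3 (matVec Rᵀ v) x := by
  ext i; fin_cases i <;>
    simp [matVec, cross3, hat, Matrix.mulVec, Matrix.mul_apply, dotProduct, Fin.sum_univ_three] <;>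
    ring

theorem cross3_cross3_right (a b x : V3) :
    cross3 (cross3 a b) x = cross3 (cross3 a x) b + cross3 a (cross3 b x) := by
  ext i; fin_cases i <;> simp [cross3] <;> ring

theorem matVec_cross3_matVec_transpose (M : M3) (u v : V3) :
    matVec M (cross3 (matVec Mᵀ u) (matVec Mᵀ v)) = M.det • cross3 u v := by
  ext i; fin_cases i <;>
    simp [matVec, cross3, Matrix.mulVec, dotProduct, Matrix.det_fin_three, Fin.sum_univ_three] <;>
    ring

theorem SO3.norm_matVec_transpose {R : M3} (hR : SO3 R) (x : V3) : ‖matVec Rᵀ x‖ = ‖x‖ := by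
  refine (sq_eq_sq₀ (norm_nonneg _) (norm_nonneg _)).mp ?_
  rw [← dot3_self, ← dot3_self, dot3_matVec, matVec_matVec, transpose_transpose,
    mul_eq_one_comm.mp hR.1, matVec_one]

theorem SO3.cross3_matVec_transpose {R : M3} (hR : SO3 R) (u v : V3) :
    cross3 (matVec Rᵀ u) (matVec Rᵀ v) = matVec Rᵀ (cross3 u v) :=
  calc cross3 (matVec Rᵀ u) (matVec Rᵀ v)
      = matVec Rᵀ (matVec R (cross3 (matVec Rᵀ u) (matVec Rᵀ v))) := by
        rw [matVec_matVec, hR.1, matVec_one]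
    _ = matVec Rᵀ (cross3 u v) := by
        rw [matVec_cross3_matVec_transpose, hR.2, one_smul]

theorem SO3.norm_cross3_matVec_transpose {R : M3} (hR : SO3 R) (u v : V3) :
    ‖cross3 (matVec Rᵀ u) (matVec Rᵀ v)‖ = ‖cross3 u v‖ := by
  rw [hR.cross3_matVec_transpose, hR.norm_matVec_transpose]

theorem IsBilinearMap.hasDerivAt {𝕜 E F G : Type*} [NontriviallyNormedField 𝕜] [CompleteSpace 𝕜]
    [NormedAddCommGroup E] [NormedSpace 𝕜 E] [FiniteDimensional 𝕜 E]
    [NormedAddCommGroup F] [NormedSpace 𝕜 F] [FiniteDimensional 𝕜 F]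
    [NormedAddCommGroup G] [NormedSpace 𝕜 G] {f : E → F → G} (hf : IsBilinearMap 𝕜 f)
    {u : 𝕜 → E} {v : 𝕜 → F} {u' : E} {v' : F} {t : 𝕜}
    (hu : HasDerivAt u u' t) (hv : HasDerivAt v v' t) :
    HasDerivAt (fun s => f (u s) (v s)) (f (u t) v' + f u' (v t)) t :=
  hf.toContinuousBilinearMap.hasDerivAt_of_bilinear (fun _ => hu) (fun _ => hv)

theorem isBilinearMap_dot3 : IsBilinearMap ℝ dot3 := by
  constructor <;> intros <;> simp only [dot3, PiLp.add_apply, PiLp.smul_apply, smul_eq_mul] <;>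
    ring

theorem isBilinearMap_cross3 : IsBilinearMap ℝ cross3 := by
  constructor <;> intros <;> ext i <;> fin_cases i <;> simp [cross3] <;> ring

theorem isBilinearMap_matVec : IsBilinearMap ℝ matVec := by
  constructor <;> intros <;>
    simp [matVec, Matrix.add_mulVec, Matrix.mulVec_add, Matrix.smul_mulVec, Matrix.mulVec_smul]

theorem isBilinearMap_matVec_transpose : IsBilinearMap ℝ fun (A : M3) v => matVec Aᵀ v := by
  constructor <;> intros <;>
    simp [matVec, Matrix.add_mulVec, Matrix.mulVec_add, Matrix.smul_mulVec, Matrix.mulVec_smul]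

theorem hasDerivAt_body_frame_direction {R : ℝ → M3} {Ω : V3} {t : ℝ}
    (hR : HasDerivAt R (R t * hat Ω) t) {s : V3} {b : ℝ → V3}
    (hb : ∀ τ, b τ = matVec (R τ)ᵀ s) :
    HasDerivAt b (cross3 (b t) Ω) t := by
  obtain rfl : b = fun τ => matVec (R τ)ᵀ s := funext hb
  refine (isBilinearMap_matVec_transpose.hasDerivAt hR (hasDerivAt_const t s)).congr_deriv ?_
  rw [matVec_transpose_mul_hat]
  simp [matVec]

theorem hasDerivAt_cross3_of_rotating {f g c : ℝ → V3} {Ω : V3} {t : ℝ}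
    (hc : ∀ τ, c τ = cross3 (f τ) (g τ))
    (hf : HasDerivAt f (cross3 (f t) Ω) t) (hg : HasDerivAt g (cross3 (g t) Ω) t) :
    HasDerivAt c (cross3 (c t) Ω) t := by
  obtain rfl : c = fun τ => cross3 (f τ) (g τ) := funext hc
  refine (isBilinearMap_cross3.hasDerivAt hf hg).congr_deriv ?_
  rw [add_comm]
  exact (cross3_cross3_right _ _ _).symm

theorem hasDerivAt_dot3_matVec_of_rotating {p q : ℝ → V3} {Q : ℝ → M3} {w₁ w₂ wd₁ wd₂ : V3}
    {t : ℝ} (hp : HasDerivAt p (cross3 (p t) w₁) t) (hq : HasDerivAt q (cross3 (q t) w₂) t)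
    (hQ : HasDerivAt Q (Q t * hat wd₁ - hat wd₂ * Q t) t) :
    HasDerivAt (fun s => dot3 (q s) (matVec (Q s) (p s)))
      (dot3 (w₁ - wd₁) (cross3 (matVec (Q t)ᵀ (q t)) (p t))
        + dot3 (w₂ - wd₂) (cross3 (matVec (Q t) (p t)) (q t))) t := by
  refine (isBilinearMap_dot3.hasDerivAt hq (isBilinearMap_matVec.hasDerivAt hQ hp)).congr_deriv ?_
  simp only [dot3, matVec, cross3, hat, cons_mul, Nat.succ_eq_add_one, Nat.reduceAdd, empty_mul,
    Equiv.symm_apply_apply, PiLp.add_apply, mulVec, dotProduct, Fin.sum_univ_three, cons_val_zero,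
    cons_val_one, cons_val, Matrix.sub_apply, Matrix.mul_apply, of_apply, cons_val',
    cons_val_fin_one, vecMul, PiLp.sub_apply, transpose_apply]
  ring

theorem hasDerivAt_configuration_error {p₁ q₁ p₃ q₃ : ℝ → V3} {Q : ℝ → M3} {Ψ : ℝ → ℝ}
    {w₁ w₂ wd₁ wd₂ : V3} {kα kβ a t : ℝ}
    (hp₁ : HasDerivAt p₁ (cross3 (p₁ t) w₁) t) (hq₁ : HasDerivAt q₁ (cross3 (q₁ t) w₂) t)
    (hp₃ : HasDerivAt p₃ (cross3 (p₃ t) w₁) t) (hq₃ : HasDerivAt q₃ (cross3 (q₃ t) w₂) t)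
    (hQ : HasDerivAt Q (Q t * hat wd₁ - hat wd₂ * Q t) t)
    (hΨ : ∀ s, Ψ s = kα * (1 + dot3 (q₁ s) (matVec (Q s) (p₁ s)))
      + kβ * (1 + a⁻¹ * dot3 (q₃ s) (matVec (Q s) (p₃ s)))) :
    HasDerivAt Ψ
      (dot3 (w₁ - wd₁) (kα • cross3 (matVec (Q t)ᵀ (q₁ t)) (p₁ t)
          + (kβ / a) • cross3 (matVec (Q t)ᵀ (q₃ t)) (p₃ t))
        + dot3 (w₂ - wd₂) (kα • cross3 (matVec (Q t) (p₁ t)) (q₁ t)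
          + (kβ / a) • cross3 (matVec (Q t) (p₃ t)) (q₃ t))) t := by
  rw [funext hΨ]
  refine ((((hasDerivAt_dot3_matVec_of_rotating hp₁ hq₁ hQ).const_add 1).const_mul kα).add
    ((((hasDerivAt_dot3_matVec_of_rotating hp₃ hq₃ hQ).const_mul _).const_add 1).const_mul
      kβ)).congr_deriv ?_
  simp only [dot3_eq_inner, inner_add_right, inner_smul_right, div_eq_mul_inv]
  ring

theorem hasDerivAt_kinetic_error {J : M3} (hJ : J.IsSymm) {Ω Ωd eΩ : ℝ → V3} {Ω' Ωd' e : V3}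
    {k t : ℝ} (heΩ : ∀ s, eΩ s = Ω s - Ωd s) (hΩ : HasDerivAt Ω Ω' t) (hΩd : HasDerivAt Ωd Ωd' t)
    (hdyn : matVec J Ω' + cross3 (Ω t) (matVec J (Ω t))
      = -e - k • eΩ t + matVec (hat (Ωd t)) (matVec J (eΩ t + Ωd t)) + matVec J Ωd') :
    HasDerivAt (fun s => 1 / 2 * dot3 (eΩ s) (matVec J (eΩ s)))
      (-dot3 (eΩ t) e - k * ‖eΩ t‖ ^ 2) t := by
  have he : HasDerivAt eΩ (Ω' - Ωd') t :=
    (hΩ.sub hΩd).congr_of_eventuallyEq (Filter.Eventually.of_forall heΩ)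
  have hJe : matVec J (Ω' - Ωd') = -e - k • eΩ t
      + (cross3 (Ωd t) (matVec J (Ω t)) - cross3 (Ω t) (matVec J (Ω t))) := by
    rw [matVec_sub, eq_sub_of_add_eq hdyn, heΩ, sub_add_cancel, matVec_hat]
    abel
  have hgyro :
      dot3 (eΩ t) (cross3 (Ωd t) (matVec J (Ω t)) - cross3 (Ω t) (matVec J (Ω t))) = 0 := by
    simp only [dot3, heΩ, PiLp.sub_apply, cross3, cons_val_zero, cons_val_one, cons_val]
    ring
  have hsym : dot3 (Ω' - Ωd') (matVec J (eΩ t)) = dot3 (eΩ t) (matVec J (Ω' - Ωd')) := by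
    rw [dot3_matVec, hJ.eq, dot3_comm]
  refine ((isBilinearMap_dot3.hasDerivAt he
    (isBilinearMap_matVec.hasDerivAt (hasDerivAt_const t J) he)).const_mul (1 / 2)).congr_deriv ?_
  rw [show matVec 0 (eΩ t) = 0 by simp [matVec], add_zero, hsym, hJe]
  rw [dot3_eq_inner] at hgyro
  simp only [dot3_eq_inner, inner_add_right, inner_sub_right, inner_neg_right, inner_smul_right,
    real_inner_self_eq_norm_sq, hgyro]
  ring

theorem lyapunov_nonincreasing_general
    (s₁₂ s₁₃ s₂₁ s₂₃ : V3)
    (Ω₁ Ω₂ Ω₁' Ω₂' Ωd₁ Ωd₂ Ωd₁' Ωd₂' : ℝ → V3)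
    (hΩ₁ : ∀ t, HasDerivAt Ω₁ (Ω₁' t) t) (hΩ₂ : ∀ t, HasDerivAt Ω₂ (Ω₂' t) t)
    (hΩd₁ : ∀ t, HasDerivAt Ωd₁ (Ωd₁' t) t) (hΩd₂ : ∀ t, HasDerivAt Ωd₂ (Ωd₂' t) t)
    (R₁ R₂ Qd₁₂ : ℝ → M3)
    (hR₁SO : ∀ t, SO3 (R₁ t)) (hR₂SO : ∀ t, SO3 (R₂ t))
    (hR₁ : ∀ t, HasDerivAt R₁ (R₁ t * hat (Ω₁ t)) t)
    (hR₂ : ∀ t, HasDerivAt R₂ (R₂ t * hat (Ω₂ t)) t)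
    (hQd : ∀ t, HasDerivAt Qd₁₂ (Qd₁₂ t * hat (Ωd₁ t) - hat (Ωd₂ t) * Qd₁₂ t) t)
    (Qd₂₁ : ℝ → M3) (hQd₂₁ : ∀ t, Qd₂₁ t = (Qd₁₂ t)ᵀ)
    (b₁₂ b₁₃ b₂₁ b₂₃ b₁₂₃ b₂₁₃ : ℝ → V3)
    (hb₁₂ : ∀ t, b₁₂ t = matVec (R₁ t)ᵀ s₁₂) (hb₁₃ : ∀ t, b₁₃ t = matVec (R₁ t)ᵀ s₁₃)
    (hb₂₁ : ∀ t, b₂₁ t = matVec (R₂ t)ᵀ s₂₁) (hb₂₃ : ∀ t, b₂₃ t = matVec (R₂ t)ᵀ s₂₃)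
    (hb₁₂₃ : ∀ t, b₁₂₃ t = cross3 (b₁₂ t) (b₁₃ t))
    (hb₂₁₃ : ∀ t, b₂₁₃ t = cross3 (b₂₁ t) (b₂₃ t))
    (a₁₂ : ℝ → ℝ) (ha₁₂ : ∀ t, a₁₂ t = ‖b₂₁₃ t‖ * ‖b₁₂₃ t‖)
    (kα kβ : ℝ)
    (e₁₂ : ℝ → V3)
    (he₁₂ : ∀ t, e₁₂ t = kα • cross3 (matVec (Qd₂₁ t) (b₂₁ t)) (b₁₂ t)
        + (kβ / a₁₂ t) • cross3 (matVec (Qd₂₁ t) (b₂₁₃ t)) (b₁₂₃ t))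
    (e₂₁ : ℝ → V3)
    (he₂₁ : ∀ t, e₂₁ t = kα • cross3 (matVec (Qd₁₂ t) (b₁₂ t)) (b₂₁ t)
        + (kβ / a₁₂ t) • cross3 (matVec (Qd₁₂ t) (b₁₂₃ t)) (b₂₁₃ t))
    (Ψ : ℝ → ℝ)
    (hΨ : ∀ t, Ψ t = kα * (1 + dot3 (b₂₁ t) (matVec (Qd₁₂ t) (b₁₂ t)))
        + kβ * (1 + (a₁₂ t)⁻¹ * dot3 (b₂₁₃ t) (matVec (Qd₁₂ t) (b₁₂₃ t))))
    (J₁ J₂ : M3) (hJ₁sym : J₁.IsSymm) (hJ₂sym : J₂.IsSymm)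
    (kΩ₁ kΩ₂ : ℝ) (hkΩ₁ : 0 < kΩ₁) (hkΩ₂ : 0 < kΩ₂)
    (eΩ₁ eΩ₂ : ℝ → V3)
    (heΩ₁ : ∀ t, eΩ₁ t = Ω₁ t - Ωd₁ t) (heΩ₂ : ∀ t, eΩ₂ t = Ω₂ t - Ωd₂ t)
    (u₁ u₂ : ℝ → V3)
    (hu₁ : ∀ t, u₁ t = -e₁₂ t - kΩ₁ • eΩ₁ t
        + matVec (hat (Ωd₁ t)) (matVec J₁ (eΩ₁ t + Ωd₁ t)) + matVec J₁ (Ωd₁' t))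
    (hu₂ : ∀ t, u₂ t = -e₂₁ t - kΩ₂ • eΩ₂ t
        + matVec (hat (Ωd₂ t)) (matVec J₂ (eΩ₂ t + Ωd₂ t)) + matVec J₂ (Ωd₂' t))
    (hdyn₁ : ∀ t, matVec J₁ (Ω₁' t) + cross3 (Ω₁ t) (matVec J₁ (Ω₁ t)) = u₁ t)
    (hdyn₂ : ∀ t, matVec J₂ (Ω₂' t) + cross3 (Ω₂ t) (matVec J₂ (Ω₂ t)) = u₂ t)
    (𝒰 : ℝ → ℝ)
    (h𝒰 : ∀ t, 𝒰 t = (1 / 2) * dot3 (eΩ₁ t) (matVec J₁ (eΩ₁ t))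
        + (1 / 2) * dot3 (eΩ₂ t) (matVec J₂ (eΩ₂ t)) + Ψ t) :
    (∀ t, HasDerivAt 𝒰 (-(kΩ₁ * ‖eΩ₁ t‖ ^ 2) - kΩ₂ * ‖eΩ₂ t‖ ^ 2) t) ∧
      Antitone 𝒰 := by
  have ha (t : ℝ) : a₁₂ t = ‖cross3 s₂₁ s₂₃‖ * ‖cross3 s₁₂ s₁₃‖ := by
    rw [ha₁₂, hb₂₁₃, hb₁₂₃, hb₂₁, hb₂₃, hb₁₂, hb₁₃, (hR₂SO t).norm_cross3_matVec_transpose,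
      (hR₁SO t).norm_cross3_matVec_transpose]
  have hb₁₂' (t : ℝ) := hasDerivAt_body_frame_direction (hR₁ t) hb₁₂
  have hb₁₃' (t : ℝ) := hasDerivAt_body_frame_direction (hR₁ t) hb₁₃
  have hb₂₁' (t : ℝ) := hasDerivAt_body_frame_direction (hR₂ t) hb₂₁
  have hb₂₃' (t : ℝ) := hasDerivAt_body_frame_direction (hR₂ t) hb₂₃
  have hΨ' (t : ℝ) : HasDerivAt Ψ (dot3 (eΩ₁ t) (e₁₂ t) + dot3 (eΩ₂ t) (e₂₁ t)) t := by
    rw [he₁₂, he₂₁, hQd₂₁, heΩ₁, heΩ₂, ha]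
    exact hasDerivAt_configuration_error (hb₁₂' t) (hb₂₁' t)
      (hasDerivAt_cross3_of_rotating hb₁₂₃ (hb₁₂' t) (hb₁₃' t))
      (hasDerivAt_cross3_of_rotating hb₂₁₃ (hb₂₁' t) (hb₂₃' t)) (hQd t)
      fun s => by rw [hΨ, ha]
  have h𝒰' (t : ℝ) : HasDerivAt 𝒰 (-(kΩ₁ * ‖eΩ₁ t‖ ^ 2) - kΩ₂ * ‖eΩ₂ t‖ ^ 2) t := by
    have hK₁ := hasDerivAt_kinetic_error hJ₁sym heΩ₁ (hΩ₁ t) (hΩd₁ t) ((hdyn₁ t).trans (hu₁ t))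
    have hK₂ := hasDerivAt_kinetic_error hJ₂sym heΩ₂ (hΩ₂ t) (hΩd₂ t) ((hdyn₂ t).trans (hu₂ t))
    rw [funext h𝒰]
    exact ((hK₁.add hK₂).add (hΨ' t)).congr_deriv (by ring)
  refine ⟨h𝒰', antitone_of_hasDerivAt_nonpos h𝒰' fun t => ?_⟩
  rw [Pi.zero_apply]
  linarith [mul_nonneg hkΩ₁.le (sq_nonneg ‖eΩ₁ t‖), mul_nonneg hkΩ₂.le (sq_nonneg ‖eΩ₂ t‖)]

/-- the Lyapunov-like function 𝒰 is non-increasing along closed-loop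
trajectories, with 𝒰̇ = −k_{Ω₁}‖e_{Ω₁}‖² − k_{Ω₂}‖e_{Ω₂}‖². -/
theorem lyapunov_nonincreasing
    (s₁₂ s₁₃ s₂₁ s₂₃ : V3)
    (hs₁₂ : ‖s₁₂‖ = 1) (hs₁₃ : ‖s₁₃‖ = 1) (hs₂₁ : ‖s₂₁‖ = 1) (hs₂₃ : ‖s₂₃‖ = 1)
    (hopp : s₁₂ = -s₂₁)
    (s₁₂₃ s₂₁₃ : V3) (hs₁₂₃ : s₁₂₃ = cross3 s₁₂ s₁₃) (hs₂₁₃ : s₂₁₃ = cross3 s₂₁ s₂₃)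
    (h₁ : s₁₂₃ ≠ 0) (h₂ : s₂₁₃ ≠ 0)
    (hnormal : ‖s₂₁₃‖⁻¹ • s₂₁₃ = -(‖s₁₂₃‖⁻¹ • s₁₂₃))
    (Ω₁ Ω₂ Ω₁' Ω₂' Ωd₁ Ωd₂ Ωd₁' Ωd₂' : ℝ → V3)
    (hΩ₁ : ∀ t, HasDerivAt Ω₁ (Ω₁' t) t) (hΩ₂ : ∀ t, HasDerivAt Ω₂ (Ω₂' t) t)
    (hΩd₁ : ∀ t, HasDerivAt Ωd₁ (Ωd₁' t) t) (hΩd₂ : ∀ t, HasDerivAt Ωd₂ (Ωd₂' t) t)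
    (R₁ R₂ Qd₁₂ : ℝ → M3)
    (hR₁SO : ∀ t, SO3 (R₁ t)) (hR₂SO : ∀ t, SO3 (R₂ t)) (hQdSO : ∀ t, SO3 (Qd₁₂ t))
    (hR₁ : ∀ t, HasDerivAt R₁ (R₁ t * hat (Ω₁ t)) t)
    (hR₂ : ∀ t, HasDerivAt R₂ (R₂ t * hat (Ω₂ t)) t)
    (hQd : ∀ t, HasDerivAt Qd₁₂ (Qd₁₂ t * hat (Ωd₁ t) - hat (Ωd₂ t) * Qd₁₂ t) t)
    (Qd₂₁ : ℝ → M3) (hQd₂₁ : ∀ t, Qd₂₁ t = (Qd₁₂ t)ᵀ)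
    (b₁₂ b₁₃ b₂₁ b₂₃ b₁₂₃ b₂₁₃ : ℝ → V3)
    (hb₁₂ : ∀ t, b₁₂ t = matVec (R₁ t)ᵀ s₁₂) (hb₁₃ : ∀ t, b₁₃ t = matVec (R₁ t)ᵀ s₁₃)
    (hb₂₁ : ∀ t, b₂₁ t = matVec (R₂ t)ᵀ s₂₁) (hb₂₃ : ∀ t, b₂₃ t = matVec (R₂ t)ᵀ s₂₃)
    (hb₁₂₃ : ∀ t, b₁₂₃ t = cross3 (b₁₂ t) (b₁₃ t))
    (hb₂₁₃ : ∀ t, b₂₁₃ t = cross3 (b₂₁ t) (b₂₃ t))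
    (a₁₂ : ℝ → ℝ) (ha₁₂ : ∀ t, a₁₂ t = ‖b₂₁₃ t‖ * ‖b₁₂₃ t‖)
    (kα kβ : ℝ) (hkα : 0 < kα) (hkβ : 0 < kβ)
    (e₁₂ : ℝ → V3)
    (he₁₂ : ∀ t, e₁₂ t = kα • cross3 (matVec (Qd₂₁ t) (b₂₁ t)) (b₁₂ t)
        + (kβ / a₁₂ t) • cross3 (matVec (Qd₂₁ t) (b₂₁₃ t)) (b₁₂₃ t))
    (e₂₁ : ℝ → V3)
    (he₂₁ : ∀ t, e₂₁ t = kα • cross3 (matVec (Qd₁₂ t) (b₁₂ t)) (b₂₁ t)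
        + (kβ / a₁₂ t) • cross3 (matVec (Qd₁₂ t) (b₁₂₃ t)) (b₂₁₃ t))
    (Ψ : ℝ → ℝ)
    (hΨ : ∀ t, Ψ t = kα * (1 + dot3 (b₂₁ t) (matVec (Qd₁₂ t) (b₁₂ t)))
        + kβ * (1 + (a₁₂ t)⁻¹ * dot3 (b₂₁₃ t) (matVec (Qd₁₂ t) (b₁₂₃ t))))
    (J₁ J₂ : M3) (hJ₁sym : J₁.IsSymm) (hJ₁pos : J₁.PosDef)
    (hJ₂sym : J₂.IsSymm) (hJ₂pos : J₂.PosDef)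
    (kΩ₁ kΩ₂ : ℝ) (hkΩ₁ : 0 < kΩ₁) (hkΩ₂ : 0 < kΩ₂)
    (eΩ₁ eΩ₂ : ℝ → V3)
    (heΩ₁ : ∀ t, eΩ₁ t = Ω₁ t - Ωd₁ t) (heΩ₂ : ∀ t, eΩ₂ t = Ω₂ t - Ωd₂ t)
    (u₁ u₂ : ℝ → V3)
    (hu₁ : ∀ t, u₁ t = -e₁₂ t - kΩ₁ • eΩ₁ t
        + matVec (hat (Ωd₁ t)) (matVec J₁ (eΩ₁ t + Ωd₁ t)) + matVec J₁ (Ωd₁' t))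
    (hu₂ : ∀ t, u₂ t = -e₂₁ t - kΩ₂ • eΩ₂ t
        + matVec (hat (Ωd₂ t)) (matVec J₂ (eΩ₂ t + Ωd₂ t)) + matVec J₂ (Ωd₂' t))
    (hdyn₁ : ∀ t, matVec J₁ (Ω₁' t) + cross3 (Ω₁ t) (matVec J₁ (Ω₁ t)) = u₁ t)
    (hdyn₂ : ∀ t, matVec J₂ (Ω₂' t) + cross3 (Ω₂ t) (matVec J₂ (Ω₂ t)) = u₂ t)
    (𝒰 : ℝ → ℝ)
    (h𝒰 : ∀ t, 𝒰 t = (1 / 2) * dot3 (eΩ₁ t) (matVec J₁ (eΩ₁ t))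
        + (1 / 2) * dot3 (eΩ₂ t) (matVec J₂ (eΩ₂ t)) + Ψ t) :
    (∀ t, HasDerivAt 𝒰 (-(kΩ₁ * ‖eΩ₁ t‖ ^ 2) - kΩ₂ * ‖eΩ₂ t‖ ^ 2) t) ∧
      Antitone 𝒰 :=
  lyapunov_nonincreasing_general s₁₂ s₁₃ s₂₁ s₂₃ Ω₁ Ω₂ Ω₁' Ω₂' Ωd₁ Ωd₂ Ωd₁' Ωd₂' hΩ₁ hΩ₂ hΩd₁ hΩd₂
    R₁ R₂ Qd₁₂ hR₁SO hR₂SO hR₁ hR₂ hQd Qd₂₁ hQd₂₁ b₁₂ b₁₃ b₂₁ b₂₃ b₁₂₃ b₂₁₃ hb₁₂ hb₁₃ hb₂₁ hb₂₃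
    hb₁₂₃ hb₂₁₃ a₁₂ ha₁₂ kα kβ e₁₂ he₁₂ e₂₁ he₂₁ Ψ hΨ J₁ J₂ hJ₁sym hJ₂sym kΩ₁ kΩ₂ hkΩ₁ hkΩ₂ eΩ₁ eΩ₂
    heΩ₁ heΩ₂ u₁ u₂ hu₁ hu₂ hdyn₁ hdyn₂ 𝒰 h𝒰
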